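/- Let A be an alphabet with at least two letters. There exists no set S of substitutions of A* such that A^ω is exactly the set of all S-adic words. Moreover, any set S of substitutions with A^ω equal to the stable set of S must contain a permutation (a morphism f with f(A) = A). -/

import Mathlib

/-!
Call a nonerasing substitution `g` expanding if some `g c` has length at least `2`. Every
expanding `g` has a barrier, a word that is a factor of no image word `g(l)`: a long power of a
letter `x` if every image contains a letter other than `x`; otherwise every image is a power of a
single letter, distinct letters having distinct images, and `z xʲ⁺¹ z` works, where `xʲ` (`j ≥ 2`)
is the unique image that is a power of `x` and `z ≠ x`. Enumerating the countably many
substitutions and concatenating, for each of them, a list of all letters followed by its barrier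
gives an infinite word `w` in which every letter occurs and which, for each expanding `g`, has only
boundedly long prefixes of the form `g(l)`.

Then `w` is not `S`-adic, since the compositions `σ₁ ⋯ σₙ` become expanding and afterwards have
arbitrarily long images that are prefixes of `w`. And if `w = σ(w')` with `σ` nonerasing, then `σ`
is not expanding, so it maps letters to letters, surjectively because every letter occurs in `w`.
-/

universe u
variable {A : Type u}

/-- Apply a substitution (given by images of letters) to a finite word. -/
def applyList (f : A → List A) (u : List A) : List A := u.flatMap f

/-- Starting position of the image of the `n`-th letter of `v` inside `f(v)`. -/
def blockStart (f : A → List A) (v : ℕ → A) : ℕ → ℕ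
  | 0 => 0
  | n + 1 => blockStart f v n + (f (v n)).length

/-- `ApplyEq f v u` means `u = f(v)` for right-infinite words. -/
def ApplyEq (f : A → List A) (v u : ℕ → A) : Prop :=
  ∀ (n i : ℕ) (h : i < (f (v n)).length),
    u (blockStart f v n + i) = (f (v n))[i]

/-- `u` occurs as a factor of `w` at position `k`. -/
def FactorAt (w : ℕ → A) (u : List A) (k : ℕ) : Prop :=
  ∀ (i : ℕ) (h : i < u.length), u[i] = w (k + i)

def Factor (w : ℕ → A) (u : List A) : Prop := ∃ k, FactorAt w u k

/-- `u` is a prefix of the infinite word `w`. -/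
def PrefixOf (u : List A) (w : ℕ → A) : Prop :=
  ∀ (i : ℕ) (h : i < u.length), u[i] = w i

/-- Membership in the stable set of a set `S` of substitutions. -/
def InStable (S : Set (A → List A)) (w : ℕ → A) : Prop :=
  ∃ (σ : ℕ → A → List A) (ws : ℕ → ℕ → A),
    (∀ n, σ n ∈ S) ∧ ws 0 = w ∧ ∀ n, ApplyEq (σ n) (ws (n + 1)) (ws n)

/-- Composition `σ_1 ∘ ⋯ ∘ σ_n` of the first `n` substitutions of `s` (0-indexed). -/
def compSeq (s : ℕ → A → List A) : ℕ → A → List A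
  | 0 => fun a => [a]
  | n + 1 => fun a => applyList (compSeq s n) (s n a)

/-- `w` is S-adic with directive sequence `σ`. -/
def SAdicWith (σ : ℕ → A → List A) (w : ℕ → A) : Prop :=
  ∃ a : ℕ → A, (∀ n, PrefixOf (compSeq σ n (a n)) w) ∧
    ∀ N : ℕ, ∃ n, N ≤ (compSeq σ n (a n)).length

@[simp] lemma applyList_nil (f : A → List A) : applyList f [] = [] := rfl

@[simp] lemma applyList_cons (f : A → List A) (c : A) (l : List A) :
    applyList f (c :: l) = f c ++ applyList f l := List.flatMap_cons

@[simp] lemma applyList_append (f : A → List A) (u v : List A) :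
    applyList f (u ++ v) = applyList f u ++ applyList f v := List.flatMap_append

lemma applyList_applyList (f g : A → List A) (l : List A) :
    applyList f (applyList g l) = applyList (fun a => applyList f (g a)) l :=
  List.flatMap_assoc

lemma length_le_length_applyList {f : A → List A} (hf : ∀ c, f c ≠ []) (l : List A) :
    l.length ≤ (applyList f l).length := by
  induction l with
  | nil => simp
  | cons c l ih =>
    have := List.length_pos_iff.mpr (hf c)
    simp only [applyList_cons, List.length_append, List.length_cons]
    omega

lemma compSeq_ne_nil {s : ℕ → A → List A} (hs : ∀ n c, s n c ≠ []) (n : ℕ) (a : A) :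
    compSeq s n a ≠ [] := by
  induction n generalizing a with
  | zero => simp [compSeq]
  | succ n ih =>
    obtain ⟨c, l, hl⟩ := List.exists_cons_of_ne_nil (hs n a)
    simp [compSeq, hl, ih c]

lemma compSeq_add (s : ℕ → A → List A) (m d : ℕ) (a : A) :
    compSeq s (m + d) a = applyList (compSeq s m) (compSeq (fun i => s (m + i)) d a) := by
  induction d generalizing a with
  | zero => simp [compSeq, applyList]
  | succ d ih =>
    rw [← Nat.add_assoc, compSeq, compSeq, applyList_applyList]
    exact congrArg₂ _ (funext ih) rfl

lemma PrefixOf.isPrefix_of_length_le {p q : List A} {w : ℕ → A} (hp : PrefixOf p w)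
    (hq : PrefixOf q w) (hqp : q.length ≤ p.length) : q <+: p := by
  refine List.prefix_iff_eq_take.mpr (List.ext_getElem (by simp [hqp]) fun i hi _ => ?_)
  rw [List.getElem_take, hq i hi, hp i (by omega)]

lemma blockStart_eq_length_applyList (f : A → List A) (v : ℕ → A) (n : ℕ) :
    blockStart f v n = (applyList f ((List.range n).map v)).length := by
  induction n with
  | zero => rfl
  | succ n ih => simp [blockStart, List.range_succ, ih]

lemma ApplyEq.prefixOf_applyList {f : A → List A} {v u : ℕ → A} (h : ApplyEq f v u) (n : ℕ) :
    PrefixOf (applyList f ((List.range n).map v)) u := by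
  induction n with
  | zero => simp [PrefixOf]
  | succ n ih =>
    have hsucc : applyList f ((List.range (n + 1)).map v)
        = applyList f ((List.range n).map v) ++ f (v n) := by
      simp [List.range_succ]
    rw [hsucc]
    intro i hi
    rw [List.length_append] at hi
    by_cases hin : i < (applyList f ((List.range n).map v)).length
    · rw [List.getElem_append_left hin, ih i hin]
    · rw [List.getElem_append_right (by omega), ← h n _ (by omega),
        blockStart_eq_length_applyList]
      congr 1
      omega

lemma exists_drop_applyList_eq (g : A → List A) (l : List A) (k : ℕ)
    (hk : k < (applyList g l).length) :
    ∃ c k' l', k' < (g c).length ∧ (applyList g l).drop k = (g c).drop k' ++ applyList g l' := by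
  induction l generalizing k with
  | nil => simp at hk
  | cons c l ih =>
    rw [applyList_cons] at hk ⊢
    by_cases hkc : k < (g c).length
    · exact ⟨c, k, l, hkc, List.drop_append_of_le_length hkc.le⟩
    · rw [List.length_append] at hk
      rw [List.drop_append, List.drop_eq_nil_of_le (by omega), List.nil_append]
      exact ih _ (by omega)

lemma exists_prefix_drop_applyList_of_infix {g : A → List A} {B l : List A} (hB : B ≠ [])
    (h : B <:+: applyList g l) :
    ∃ c k l', k < (g c).length ∧ B <+: (g c).drop k ++ applyList g l' := by
  obtain ⟨s, t, hst⟩ := h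
  have hdrop : (applyList g l).drop s.length = B ++ t := by
    rw [← hst, List.append_assoc, List.drop_append_length]
  have hk : s.length < (applyList g l).length := by
    have := List.length_pos_iff.mpr hB
    rw [← hst]
    simp only [List.length_append]
    omega
  obtain ⟨c, k, l', hkc, heq⟩ := exists_drop_applyList_eq g l s.length hk
  exact ⟨c, k, l', hkc, heq ▸ hdrop ▸ List.prefix_append B t⟩

lemma exists_infix_of_infix_applyList {g : A → List A} {L : ℕ} (hL : ∀ c, (g c).length ≤ L)
    {B l : List A} (hB : B ≠ []) (hBL : 2 * L ≤ B.length) (h : B <:+: applyList g l) :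
    ∃ d, g d <:+: B := by
  obtain ⟨c, k, l', hk, hpre⟩ := exists_prefix_drop_applyList_of_infix hB h
  have hu : (g c).drop k <+: B :=
    List.prefix_of_prefix_length_le (List.prefix_append _ _) hpre
      (by have := hL c; simp only [List.length_drop]; omega)
  obtain ⟨B', rfl⟩ := hu
  rw [List.prefix_append_right_inj] at hpre
  cases l' with
  | nil =>
    have := hL c
    simp only [applyList_nil, List.prefix_nil] at hpre
    simp only [hpre, List.append_nil, List.length_drop] at hBL
    omega
  | cons d l' =>
    rw [applyList_cons] at hpre
    have hdB : g d <+: B' :=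
      List.prefix_of_prefix_length_le (List.prefix_append _ _) hpre
        (by have := hL c; have := hL d; simp only [List.length_append, List.length_drop] at hBL; omega)
    exact ⟨d, hdB.isInfix.trans (List.suffix_append _ _).isInfix⟩

lemma not_replicate_infix_applyList {g : A → List A} {L : ℕ} (hL : ∀ c, (g c).length ≤ L)
    {x : A} (hx : ∀ c, ∃ y ∈ g c, y ≠ x) (l : List A) :
    ¬ List.replicate (2 * L + 1) x <:+: applyList g l := by
  intro h
  obtain ⟨d, hd⟩ := exists_infix_of_infix_applyList hL (by simp) (by simp) h
  obtain ⟨y, hy, hyx⟩ := hx d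
  exact hyx (List.eq_of_mem_replicate (hd.subset hy))

lemma not_replicate_append_prefix_applyList {g : A → List A} {x z : A} {j : ℕ}
    (hx : ∀ c, x ∈ g c → g c = List.replicate j x) (hzx : z ≠ x) (l : List A) (r : ℕ)
    (hr : ¬ j ∣ r) : ¬ List.replicate r x ++ [z] <+: applyList g l := by
  induction l generalizing r with
  | nil => simp
  | cons d l ih =>
    intro h
    rw [applyList_cons] at h
    rcases hgd : g d with _ | ⟨y, ys⟩
    · rw [hgd, List.nil_append] at h
      exact ih r hr h
    have hxy : x = y := by
      obtain ⟨r', rfl⟩ := Nat.exists_eq_add_one_of_ne_zero (n := r) (by rintro rfl; exact hr (dvd_zero j))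
      rw [hgd, List.replicate_succ, List.cons_append, List.cons_append, List.cons_prefix_cons] at h
      exact h.1
    rw [hx d (by rw [hgd, hxy]; exact List.mem_cons_self)] at h
    rcases le_or_gt j r with hjr | hjr
    · obtain ⟨s, rfl⟩ := Nat.exists_eq_add_of_le hjr
      rw [List.replicate_add, List.append_assoc, List.prefix_append_right_inj] at h
      exact ih s (fun hs => hr ((Nat.dvd_add_right (dvd_refl j)).mpr hs)) h
    · obtain ⟨s, rfl⟩ := Nat.exists_eq_add_of_lt hjr
      rw [Nat.add_assoc, List.replicate_add, List.append_assoc, List.prefix_append_right_inj,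
        List.replicate_succ, List.cons_append, List.singleton_prefix_cons_iff] at h
      exact hzx h

lemma not_infix_applyList_of_pure {g : A → List A} {x z : A} {j : ℕ}
    (hpure : ∀ c, ∃ y, g c = List.replicate (g c).length y)
    (hx : ∀ c, x ∈ g c → g c = List.replicate j x) (hj : 2 ≤ j) (hzx : z ≠ x) (l : List A) :
    ¬ z :: (List.replicate (j + 1) x ++ [z]) <:+: applyList g l := by
  intro h
  obtain ⟨c, k, l', hk, hpre⟩ := exists_prefix_drop_applyList_of_infix (List.cons_ne_nil _ _) h
  obtain ⟨y, hy⟩ := hpure c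
  rw [hy, List.drop_replicate] at hpre
  obtain ⟨m, hm⟩ := Nat.exists_eq_add_one_of_ne_zero (Nat.sub_ne_zero_of_lt hk)
  rw [hm] at hpre
  simp only [List.replicate_succ, List.cons_append, List.cons_prefix_cons] at hpre
  obtain ⟨rfl, hpre⟩ := hpre
  rcases m with _ | m
  · refine not_replicate_append_prefix_applyList hx hzx l' (j + 1) ?_ hpre
    rw [Nat.dvd_add_right (dvd_refl j)]
    exact Nat.not_dvd_of_pos_of_lt one_pos hj
  · simp only [List.replicate_succ, List.cons_append, List.cons_prefix_cons] at hpre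
    exact hzx hpre.1.symm

lemma exists_forall_not_infix_applyList [Fintype A] [Nontrivial A] {g : A → List A}
    (hg : ∀ c, g c ≠ []) (hlong : ∃ c, 2 ≤ (g c).length) :
    ∃ B : List A, ∀ l, ¬ B <:+: applyList g l := by
  by_cases hcov : ∃ x, ∀ c, ∃ y ∈ g c, y ≠ x
  · obtain ⟨x, hx⟩ := hcov
    exact ⟨_, not_replicate_infix_applyList
      (fun c => Finset.le_sup (f := fun c => (g c).length) (Finset.mem_univ c)) hx⟩
  push Not at hcov
  choose cx hcx using hcov
  have hinj : Function.Injective cx := by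
    intro x x' h
    obtain ⟨y, hy⟩ := List.exists_mem_of_ne_nil _ (hg (cx x))
    exact (hcx x y hy).symm.trans (hcx x' y (h ▸ hy))
  have hsurj := Finite.surjective_of_injective hinj
  obtain ⟨c₀, hc₀⟩ := hlong
  obtain ⟨x, rfl⟩ := hsurj c₀
  obtain ⟨z, hz⟩ := exists_ne x
  refine ⟨_, not_infix_applyList_of_pure ?_ ?_ hc₀ hz⟩
  · intro c
    obtain ⟨y, rfl⟩ := hsurj c
    exact ⟨y, List.eq_replicate_iff.mpr ⟨rfl, hcx y⟩⟩
  · intro c hxc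
    obtain ⟨y, rfl⟩ := hsurj c
    obtain rfl := hcx y x hxc
    exact List.eq_replicate_iff.mpr ⟨rfl, hcx x⟩

lemma exists_prefixOf_of_isPrefix_succ {p : ℕ → List A} (hmono : ∀ n, p n <+: p (n + 1))
    (hlen : ∀ n, n ≤ (p n).length) : ∃ w : ℕ → A, ∀ n, PrefixOf (p n) w := by
  have hle : ∀ m n, m ≤ n → p m <+: p n := by
    intro m n h
    induction h with
    | refl => exact List.prefix_refl _
    | step _ ih => exact ih.trans (hmono _)
  refine ⟨fun k => (p (k + 1))[k]'(hlen (k + 1)), fun n i hi => ?_⟩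
  show (p n)[i] = (p (i + 1))[i]'(hlen (i + 1))
  rw [(hle n (n + i + 1) (by omega)).getElem hi, (hle (i + 1) (n + i + 1) (by omega)).getElem]

def ImagePrefixesBounded (w : ℕ → A) : Prop :=
  ∀ g : A → List A, (∀ c, g c ≠ []) → (∃ c, 2 ≤ (g c).length) →
    ∃ N, ∀ l, PrefixOf (applyList g l) w → (applyList g l).length ≤ N

lemma exists_imagePrefixesBounded [Fintype A] [Nontrivial A] :
    ∃ w : ℕ → A, (∀ y, ∃ j, w j = y) ∧ ImagePrefixesBounded w := by
  have hbar : ∀ g : A → List A, ∃ B : List A, (∀ c, g c ≠ []) → (∃ c, 2 ≤ (g c).length) →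
      ∀ l, ¬ B <:+: applyList g l := by
    intro g
    by_cases h : (∀ c, g c ≠ []) ∧ ∃ c, 2 ≤ (g c).length
    · obtain ⟨B, hB⟩ := exists_forall_not_infix_applyList h.1 h.2
      exact ⟨B, fun _ _ => hB⟩
    · exact ⟨[], fun h₁ h₂ => absurd ⟨h₁, h₂⟩ h⟩
  choose bar hbar using hbar
  obtain ⟨e, he⟩ := exists_surjective_nat (A → List A)
  set seg : ℕ → List A := fun i => Finset.univ.toList ++ bar (e i)
  set pre : ℕ → List A := fun n => (List.range n).flatMap seg
  have pre_succ : ∀ n, pre (n + 1) = pre n ++ seg n := by simp [pre, List.range_succ]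
  have hlen : ∀ n, n ≤ (pre n).length := by
    intro n
    induction n with
    | zero => simp
    | succ n ih =>
      have : 0 < (seg n).length := by simp [seg, Fintype.card_pos]
      rw [pre_succ, List.length_append]
      omega
  obtain ⟨w, hw⟩ := exists_prefixOf_of_isPrefix_succ
    (fun n => pre_succ n ▸ List.prefix_append _ _) hlen
  refine ⟨w, fun y => ?_, fun g hg hlong => ?_⟩
  · have hy : y ∈ pre 1 := by simp [pre, seg]
    obtain ⟨j, hj, rfl⟩ := List.getElem_of_mem hy
    exact ⟨j, (hw 1 j hj).symm⟩
  · obtain ⟨i, rfl⟩ := he g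
    refine ⟨(pre (i + 1)).length, fun l hl => ?_⟩
    by_contra! hlt
    have hpre : pre (i + 1) <+: applyList (e i) l := hl.isPrefix_of_length_le (hw _) hlt.le
    have hsuf : bar (e i) <:+ pre (i + 1) := by
      rw [pre_succ, ← List.append_assoc]
      exact List.suffix_append _ _
    exact hbar (e i) hg hlong l (hsuf.isInfix.trans hpre.isInfix)

lemma exists_le_lt_of_forall_exists_le {f : ℕ → ℕ} (h : ∀ N, ∃ n, N ≤ f n) (m N : ℕ) :
    ∃ n, m ≤ n ∧ N < f n := by
  by_contra! hle
  obtain ⟨M, hM⟩ := ((Set.finite_Iio m).image f).bddAbove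
  obtain ⟨n, hn⟩ := h (max M N + 1)
  rcases lt_or_ge n m with hnm | hnm
  · have := hM ⟨n, hnm, rfl⟩
    omega
  · have := hle n hnm
    omega

lemma ImagePrefixesBounded.not_sAdicWith {w : ℕ → A} (hw : ImagePrefixesBounded w)
    {σ : ℕ → A → List A} (hσ : ∀ n c, σ n c ≠ []) : ¬ SAdicWith σ w := by
  rintro ⟨a, hpref, hunb⟩
  obtain ⟨m, hm⟩ := hunb 2
  obtain ⟨N, hN⟩ := hw (compSeq σ m) (compSeq_ne_nil hσ m) ⟨a m, hm⟩
  obtain ⟨n, hmn, hn⟩ := exists_le_lt_of_forall_exists_le hunb m N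
  obtain ⟨d, rfl⟩ := Nat.exists_eq_add_of_le hmn
  have hprefix := hpref (m + d)
  rw [compSeq_add] at hprefix hn
  exact (hN _ hprefix).not_gt hn

lemma ImagePrefixesBounded.range_eq_of_applyEq {w : ℕ → A} (hw : ImagePrefixesBounded w)
    (hocc : ∀ y, ∃ j, w j = y) {g : A → List A} (hg : ∀ c, g c ≠ []) {v : ℕ → A}
    (h : ApplyEq g v w) : Set.range g = Set.range (fun b : A => [b]) := by
  have hshort : ∀ c, (g c).length ≤ 1 := by
    by_contra! hlong
    obtain ⟨N, hN⟩ := hw g hg hlong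
    have hle := length_le_length_applyList hg ((List.range (N + 1)).map v)
    have := hN _ (h.prefixOf_applyList (N + 1))
    simp only [List.length_map, List.length_range] at hle
    omega
  choose π hπ using fun c =>
    List.length_eq_one_iff.mp (le_antisymm (hshort c) (List.length_pos_iff.mpr (hg c)))
  have hblock : ∀ n, blockStart g v n = n := by
    intro n
    induction n with
    | zero => rfl
    | succ n ih => simp [blockStart, ih, hπ]
  have hwπ : ∀ n, w n = π (v n) := by
    intro n
    simpa [hblock, hπ] using h n 0 (by simp [hπ])
  ext u
  constructor
  · rintro ⟨c, rfl⟩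
    exact ⟨π c, (hπ c).symm⟩
  · rintro ⟨y, rfl⟩
    obtain ⟨j, rfl⟩ := hocc y
    exact ⟨v j, by rw [hπ, hwπ]⟩

/-- for `#A ≥ 2`, no set of substitutions has `A^ω` as its set of
S-adic words; and any `S` with `A^ω = Stab(S)` contains a permutation. -/
theorem stmt11 {A : Type u} [Fintype A] (hA : 2 ≤ Fintype.card A) :
    (¬ ∃ S : Set (A → List A), (∀ f ∈ S, ∀ a, f a ≠ []) ∧
        ∀ w : ℕ → A, ∃ σ, (∀ n, σ n ∈ S) ∧ SAdicWith σ w) ∧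
      ∀ S : Set (A → List A), (∀ f ∈ S, ∀ a, f a ≠ []) →
        (∀ w : ℕ → A, InStable S w) →
        ∃ f ∈ S, Set.range f = Set.range (fun b : A => [b]) := by
  have : Nontrivial A := Fintype.one_lt_card_iff_nontrivial.mp hA
  obtain ⟨w, hocc, hw⟩ := exists_imagePrefixesBounded (A := A)
  refine ⟨?_, fun S hS hstab => ?_⟩
  · rintro ⟨S, hS, hadic⟩
    obtain ⟨σ, hσ, hσw⟩ := hadic w
    exact hw.not_sAdicWith (fun n => hS _ (hσ n)) hσw
  · obtain ⟨σ, ws, hσ, rfl, happ⟩ := hstab w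
    exact ⟨σ 0, hσ 0, hw.range_eq_of_applyEq hocc (hS _ (hσ 0)) (happ 0)⟩
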